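/- Let ε ∈ [0,1] and define the map T_B(r,s) := (r + (ε/4) r' ∂^{-1}(s) + (ε/4) rs + (ε/8) s², s + (ε/4) s' ∂^{-1}(r) + (ε/4) rs + (ε/8) r²). For real-valued r, s ∈ W^{2,1}(ℝ), write (r₁, s₁) := T_B(r, s) and set H_BW(r₁,s₁) := ∫_ℝ (r₁² + s₁²) dx + (ε/2)∫_ℝ (r₁³ + s₁³) dx − (ε/2)∫_ℝ (r₁² s₁ + r₁ s₁²) dx, L(r,s) := ∫_ℝ (r² + s²) dx, Z(r,s) := (1/2)∫_ℝ (r³ + s³) dx. Then |H_BW(T_B(r,s)) − L(r,s) − εZ(r,s)| ≤ ε² C(‖r‖_{W^{2,1}}, ‖s‖_{W^{2,1}}), where C is a nondecreasing function of its arguments independent of ε. -/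

import Mathlib

open MeasureTheory Real
open scoped ENNReal

/-- Fourier transform of a real-valued function on ℝ (as a complex-valued function). -/
noncomputable def fourierC (u : ℝ → ℝ) : ℝ → ℂ :=
  FourierTransform.fourier (fun x => (u x : ℂ))

/-- Fourier multiplier with (real) symbol `G`, acting on real-valued functions. -/
noncomputable def fourierMul (G : ℝ → ℝ) (u : ℝ → ℝ) : ℝ → ℝ :=
  fun x => (FourierTransformInv.fourierInv (fun ξ => (G ξ : ℂ) * fourierC u ξ) x).re

/-- The `H^α(ℝ)` Sobolev norm, `‖(1+ξ²)^{α/2} û‖_{L²}`. -/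
noncomputable def HNorm (α : ℝ) (u : ℝ → ℝ) : ℝ≥0∞ :=
  eLpNorm (fun ξ : ℝ => (1 + ξ ^ 2) ^ (α / 2) * ‖fourierC u ξ‖) 2 volume

/-- The symbol `F_μ(ξ) = sqrt(tanh(√μ|ξ|)/(√μ|ξ|))`. -/
noncomputable def Fsymb (μ : ℝ) (ξ : ℝ) : ℝ :=
  if μ = 0 ∨ ξ = 0 then 1 else Real.sqrt (Real.tanh (Real.sqrt μ * |ξ|) / (Real.sqrt μ * |ξ|))

/-- The symbol of `F_μ⁻¹`. -/
noncomputable def FsymbInv (μ : ℝ) (ξ : ℝ) : ℝ :=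
  if μ = 0 ∨ ξ = 0 then 1 else Real.sqrt ((Real.sqrt μ * |ξ|) / Real.tanh (Real.sqrt μ * |ξ|))

/-- Time derivative of a time-dependent function. -/
noncomputable def tderiv (u : ℝ → ℝ → ℝ) (t x : ℝ) : ℝ :=
  deriv (fun τ => u τ x) t

/-- The `W^{α,1}(ℝ)` norm for integer `α`. -/
noncomputable def WNorm (α : ℕ) (u : ℝ → ℝ) : ℝ≥0∞ :=
  ∑ k ∈ Finset.range (α + 1), eLpNorm (iteratedDeriv k u) 1 volume

/-- Membership in `W^{α,1}(ℝ)` (with a smooth-representative convention). -/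
def MemW (α : ℕ) (u : ℝ → ℝ) : Prop :=
  ContDiff ℝ (α : ℕ∞) u ∧ ∀ k ≤ α, MeasureTheory.Integrable (iteratedDeriv k u)

/-- The antiderivative operator `∂⁻¹u(x) = (1/2)∫ sgn(x−y)u(y)dy`. -/
noncomputable def pinv (u : ℝ → ℝ) : ℝ → ℝ :=
  fun x => (1 / 2) * ∫ y, Real.sign (x - y) * u y

/-- First component of the Birkhoff transformation `T_B`. -/
noncomputable def TB1 (ε : ℝ) (r s : ℝ → ℝ) : ℝ → ℝ :=
  fun x => r x + (ε / 4) * deriv r x * pinv s x + (ε / 4) * r x * s x + (ε / 8) * (s x) ^ 2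

/-- Second component of the Birkhoff transformation `T_B`. -/
noncomputable def TB2 (ε : ℝ) (r s : ℝ → ℝ) : ℝ → ℝ :=
  fun x => s x + (ε / 4) * deriv s x * pinv r x + (ε / 4) * r x * s x + (ε / 8) * (r x) ^ 2

/-- The Hamiltonian `H_BW`. -/
noncomputable def HBW (ε : ℝ) (r s : ℝ → ℝ) : ℝ :=
  (∫ x, ((r x) ^ 2 + (s x) ^ 2)) + (ε / 2) * (∫ x, ((r x) ^ 3 + (s x) ^ 3))
    - (ε / 2) * (∫ x, ((r x) ^ 2 * s x + r x * (s x) ^ 2))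

/-!
Write `T_B(r, s) = (r + ε A, s + ε B)`. Expanding the density of `H_BW` around `(r, s)`, the
terms of order `ε` other than those of `εZ` add up to `2 r A + 2 s B - r s (r + s) / 2`, which
is the derivative of `(r² ∂⁻¹s + s² ∂⁻¹r) / 4` and so integrates to zero. What is left is `ε²`
times a polynomial in `r, s, A, B, ε` each of whose terms has a factor `A` or `B`. The `W^{2,1}`
norm bounds the sup norms of `r, r', ∂⁻¹r` and the `L¹` norms of `r, r'`, hence the sup and
`L¹` norms of `A` and `B`, and so the `L¹` norm of the remainder.
-/

open Filter Topology Set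

theorem abs_le_integral_abs_deriv {f f' : ℝ → ℝ} (hder : ∀ x, HasDerivAt f (f' x) x)
    (hf : Integrable f) (hf' : Integrable f') (x : ℝ) : |f x| ≤ ∫ y, |f' y| := by
  have hbot : Tendsto f atBot (𝓝 0) :=
    tendsto_zero_of_hasDerivAt_of_integrableOn_Iic (a := 0) (fun y _ => hder y)
      hf'.integrableOn hf.integrableOn
  have hlim : Tendsto (fun y => |f x - f y|) atBot (𝓝 |f x|) := by
    simpa using (tendsto_const_nhds.sub hbot).abs
  refine le_of_tendsto hlim ?_
  filter_upwards [eventually_le_atBot x] with y hy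
  rw [← intervalIntegral.integral_eq_sub_of_hasDerivAt (fun t _ => hder t) hf'.intervalIntegrable]
  calc |∫ t in y..x, f' t| ≤ ∫ t in y..x, |f' t| :=
        intervalIntegral.abs_integral_le_integral_abs hy
    _ = ∫ t in Ioc y x, |f' t| := intervalIntegral.integral_of_le hy
    _ ≤ ∫ t, |f' t| :=
        setIntegral_le_integral hf'.abs (Eventually.of_forall fun t => abs_nonneg _)

theorem sign_sub_mul_eq_indicator (u : ℝ → ℝ) (x y : ℝ) :
    Real.sign (x - y) * u y = (Iio x).indicator u y - (Ioi x).indicator u y := by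
  rcases lt_trichotomy y x with h | rfl | h
  · simp [h, h.not_gt, Real.sign_of_pos (sub_pos.2 h)]
  · simp
  · simp [h, h.not_gt, Real.sign_of_neg (sub_neg.2 h)]

theorem pinv_eq {u : ℝ → ℝ} (hu : Integrable u) (x : ℝ) :
    pinv u x = (∫ y in Iic x, u y) - (∫ y, u y) / 2 := by
  have hcompl : (∫ y in Iic x, u y) + (∫ y in Ioi x, u y) = ∫ y, u y := by
    simpa only [compl_Iic] using integral_add_compl measurableSet_Iic hu
  simp only [pinv, sign_sub_mul_eq_indicator]
  rw [integral_sub (hu.indicator measurableSet_Iio) (hu.indicator measurableSet_Ioi),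
    integral_indicator measurableSet_Iio, integral_indicator measurableSet_Ioi,
    ← integral_Iic_eq_integral_Iio]
  linarith

theorem hasDerivAt_pinv {u : ℝ → ℝ} (hc : Continuous u) (hu : Integrable u) (x : ℝ) :
    HasDerivAt (pinv u) (u x) x := by
  have hrepr : pinv u =
      fun x => (∫ t in (0:ℝ)..x, u t) + ((∫ y in Iic 0, u y) - (∫ y, u y) / 2) := by
    funext z
    rw [pinv_eq hu z, ← intervalIntegral.integral_Iic_sub_Iic hu.integrableOn hu.integrableOn]
    ring
  rw [hrepr]
  exact (intervalIntegral.integral_hasDerivAt_right hu.intervalIntegrable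
    (hc.stronglyMeasurableAtFilter volume (𝓝 x)) hc.continuousAt).add_const _

theorem continuous_pinv {u : ℝ → ℝ} (hc : Continuous u) (hu : Integrable u) :
    Continuous (pinv u) :=
  continuous_iff_continuousAt.2 fun x => (hasDerivAt_pinv hc hu x).continuousAt

theorem abs_pinv_le {u : ℝ → ℝ} (hu : Integrable u) (x : ℝ) :
    |pinv u x| ≤ (∫ y, |u y|) / 2 := by
  have hsign : ∀ y, |Real.sign (x - y) * u y| ≤ |u y| := fun y => by
    rw [abs_mul]
    exact mul_le_of_le_one_left (abs_nonneg _) <| by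
      rcases Real.sign_apply_eq (x - y) with h | h | h <;> simp [h]
  calc |pinv u x| = |∫ y, Real.sign (x - y) * u y| / 2 := by simp [pinv, abs_mul]; ring
    _ ≤ (∫ y, |Real.sign (x - y) * u y|) / 2 := by gcongr; exact abs_integral_le_integral_abs
    _ ≤ (∫ y, |u y|) / 2 := div_le_div_of_nonneg_right
        (integral_mono_of_nonneg (Eventually.of_forall fun y => abs_nonneg _) hu.abs
          (Eventually.of_forall hsign)) zero_le_two

structure IntegrableBdd {α : Type*} [MeasurableSpace α] (f : α → ℝ)
    (μ : Measure α := by volume_tac) : Prop where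
  integrable : Integrable f μ
  memLp_top : MemLp f ⊤ μ

namespace IntegrableBdd

variable {α : Type*} [MeasurableSpace α] {μ : Measure α} {f g : α → ℝ}

theorem of_continuous [TopologicalSpace α] [OpensMeasurableSpace α]
    [SecondCountableTopologyEither α ℝ] (hf : Integrable f μ) (hc : Continuous f) (C : ℝ)
    (hC : ∀ x, |f x| ≤ C) : IntegrableBdd f μ :=
  ⟨hf, memLp_top_of_bound hc.aestronglyMeasurable C (Eventually.of_forall hC)⟩

theorem mul_memLp_top (hf : IntegrableBdd f μ) (hg : MemLp g ⊤ μ) :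
    IntegrableBdd (fun x => f x * g x) μ :=
  ⟨hf.integrable.mul_of_top_left hg, hg.mul' hf.memLp_top⟩

theorem mul (hf : IntegrableBdd f μ) (hg : IntegrableBdd g μ) :
    IntegrableBdd (fun x => f x * g x) μ :=
  hf.mul_memLp_top hg.memLp_top

theorem add (hf : IntegrableBdd f μ) (hg : IntegrableBdd g μ) :
    IntegrableBdd (fun x => f x + g x) μ :=
  ⟨hf.integrable.add hg.integrable, hf.memLp_top.add hg.memLp_top⟩

theorem sub (hf : IntegrableBdd f μ) (hg : IntegrableBdd g μ) :
    IntegrableBdd (fun x => f x - g x) μ :=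
  ⟨hf.integrable.sub hg.integrable, hf.memLp_top.sub hg.memLp_top⟩

theorem const_mul (hf : IntegrableBdd f μ) (c : ℝ) : IntegrableBdd (fun x => c * f x) μ :=
  ⟨hf.integrable.const_mul c, hf.memLp_top.const_mul c⟩

theorem div_const (hf : IntegrableBdd f μ) (c : ℝ) : IntegrableBdd (fun x => f x / c) μ :=
  ⟨hf.integrable.div_const c, by simpa only [div_eq_mul_inv] using hf.memLp_top.mul_const c⁻¹⟩

theorem pow (hf : IntegrableBdd f μ) {n : ℕ} (hn : n ≠ 0) :
    IntegrableBdd (fun x => f x ^ n) μ := by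
  induction n with
  | zero => exact absurd rfl hn
  | succ k ih =>
    rcases eq_or_ne k 0 with rfl | hk
    · simpa only [zero_add, pow_one] using hf
    · simpa only [pow_succ] using (ih hk).mul hf

end IntegrableBdd

namespace MemW

variable {u : ℝ → ℝ}

theorem integrable {α : ℕ} (hu : MemW α u) : Integrable u := by
  simpa using hu.2 0 (Nat.zero_le α)

theorem integrable_deriv (hu : MemW 2 u) : Integrable (deriv u) := by
  simpa using hu.2 1 one_le_two

theorem integrable_deriv_deriv (hu : MemW 2 u) : Integrable (deriv (deriv u)) := by
  simpa [iteratedDeriv_succ] using hu.2 2 le_rfl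

theorem differentiable (hu : MemW 2 u) : Differentiable ℝ u :=
  hu.1.differentiable (by simp)

theorem differentiable_deriv (hu : MemW 2 u) : Differentiable ℝ (deriv u) :=
  (hu.1.iterate_deriv' 1 1).differentiable one_ne_zero

theorem WNorm_toReal {α : ℕ} (hu : MemW α u) :
    (WNorm α u).toReal = ∑ k ∈ Finset.range (α + 1), ∫ x, |iteratedDeriv k u x| := by
  have hk : ∀ k ∈ Finset.range (α + 1), Integrable (iteratedDeriv k u) := fun k hk =>
    hu.2 k (Nat.lt_succ_iff.1 (Finset.mem_range.1 hk))
  rw [WNorm, ENNReal.toReal_sum fun k hk' => (memLp_one_iff_integrable.2 (hk k hk')).eLpNorm_ne_top]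
  refine Finset.sum_congr rfl fun k hk' => ?_
  rw [toReal_eLpNorm (hk k hk').1, lpNorm_one_eq_integral_norm (hk k hk').1]
  rfl

theorem WNorm_two_toReal (hu : MemW 2 u) :
    (WNorm 2 u).toReal = (∫ x, |u x|) + (∫ x, |deriv u x|) + ∫ x, |deriv (deriv u) x| := by
  simp [hu.WNorm_toReal, Finset.sum_range_succ, iteratedDeriv_succ]

theorem abs_le_WNorm (hu : MemW 2 u) (x : ℝ) : |u x| ≤ (WNorm 2 u).toReal := by
  have := abs_le_integral_abs_deriv (fun x => (hu.differentiable x).hasDerivAt) hu.integrable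
    hu.integrable_deriv x
  rw [hu.WNorm_two_toReal]
  linarith [(integral_nonneg fun _ => abs_nonneg _ : 0 ≤ ∫ x, |u x|),
    (integral_nonneg fun _ => abs_nonneg _ : 0 ≤ ∫ x, |deriv (deriv u) x|)]

theorem abs_deriv_le_WNorm (hu : MemW 2 u) (x : ℝ) : |deriv u x| ≤ (WNorm 2 u).toReal := by
  have := abs_le_integral_abs_deriv (fun x => (hu.differentiable_deriv x).hasDerivAt)
    hu.integrable_deriv hu.integrable_deriv_deriv x
  rw [hu.WNorm_two_toReal]
  linarith [(integral_nonneg fun _ => abs_nonneg _ : 0 ≤ ∫ x, |u x|),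
    (integral_nonneg fun _ => abs_nonneg _ : 0 ≤ ∫ x, |deriv u x|)]

theorem abs_pinv_le_WNorm (hu : MemW 2 u) (x : ℝ) : |pinv u x| ≤ (WNorm 2 u).toReal / 2 := by
  have := abs_pinv_le hu.integrable x
  rw [hu.WNorm_two_toReal]
  linarith [(integral_nonneg fun _ => abs_nonneg _ : 0 ≤ ∫ x, |deriv u x|),
    (integral_nonneg fun _ => abs_nonneg _ : 0 ≤ ∫ x, |deriv (deriv u) x|)]

theorem integral_abs_add_abs_deriv_le (hu : MemW 2 u) :
    ∫ x, (|u x| + |deriv u x|) ≤ (WNorm 2 u).toReal := by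
  rw [integral_add hu.integrable.abs hu.integrable_deriv.abs, hu.WNorm_two_toReal]
  linarith [(integral_nonneg fun _ => abs_nonneg _ : 0 ≤ ∫ x, |deriv (deriv u) x|)]

theorem integrableBdd (hu : MemW 2 u) : IntegrableBdd u :=
  .of_continuous hu.integrable hu.differentiable.continuous _ hu.abs_le_WNorm

theorem integrableBdd_deriv (hu : MemW 2 u) : IntegrableBdd (deriv u) :=
  .of_continuous hu.integrable_deriv hu.differentiable_deriv.continuous _ hu.abs_deriv_le_WNorm

theorem memLp_top_pinv (hu : MemW 2 u) : MemLp (pinv u) ⊤ :=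
  memLp_top_of_bound
    (continuous_pinv hu.differentiable.continuous hu.integrable).aestronglyMeasurable _
    (Eventually.of_forall hu.abs_pinv_le_WNorm)

end MemW

noncomputable def hbwDensity (ε p q : ℝ) : ℝ :=
  p ^ 2 + q ^ 2 + ε / 2 * (p ^ 3 + q ^ 3) - ε / 2 * (p ^ 2 * q + p * q ^ 2)

theorem abs_hbwDensity_sub_le {ε p q a b N : ℝ} (hε0 : 0 ≤ ε) (hε1 : ε ≤ 1) (hN : 1 ≤ N)
    (hp : |p| ≤ N) (hq : |q| ≤ N) (ha : |a| ≤ N) (hb : |b| ≤ N) :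
    |hbwDensity ε (p + ε * a) (q + ε * b) - hbwDensity ε p q - 2 * ε * (p * a + q * b)|
      ≤ ε ^ 2 * (15 * N ^ 2 * (|a| + |b|)) := by
  -- the cubic part of the density is `(p + q) * (p - q) ^ 2`
  have hexp : hbwDensity ε (p + ε * a) (q + ε * b) - hbwDensity ε p q - 2 * ε * (p * a + q * b)
      = ε ^ 2 * (a ^ 2 + b ^ 2 + ((a + b) * (p - q + ε * (a - b)) ^ 2
          + (p + q) * (a - b) * (2 * (p - q) + ε * (a - b))) / 2) := by
    unfold hbwDensity; ring
  rw [hexp, abs_mul, abs_of_nonneg (sq_nonneg ε)]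
  gcongr
  set t := |a| + |b|
  have hsum : |a + b| ≤ t := abs_add_le a b
  have hdiff : |a - b| ≤ t := abs_sub a b
  have hpq : |p + q| ≤ 2 * N := (abs_add_le p q).trans (by linarith)
  have hpq' : |p - q| ≤ 2 * N := (abs_sub p q).trans (by linarith)
  have hεab : |ε * (a - b)| ≤ 2 * N := by
    rw [abs_mul, abs_of_nonneg hε0]
    nlinarith [abs_sub a b, abs_nonneg (a - b)]
  have hsq : |a ^ 2 + b ^ 2| ≤ N * t := by
    rw [abs_of_nonneg (by positivity), ← sq_abs a, ← sq_abs b]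
    nlinarith [abs_nonneg a, abs_nonneg b]
  have h1 : |p - q + ε * (a - b)| ≤ 4 * N := (abs_add_le _ _).trans (by linarith)
  have h2 : |2 * (p - q) + ε * (a - b)| ≤ 6 * N := by
    refine (abs_add_le _ _).trans ?_
    rw [abs_mul, abs_two]
    linarith
  calc |a ^ 2 + b ^ 2 + ((a + b) * (p - q + ε * (a - b)) ^ 2
          + (p + q) * (a - b) * (2 * (p - q) + ε * (a - b))) / 2|
      ≤ |a ^ 2 + b ^ 2| + (|a + b| * |p - q + ε * (a - b)| ^ 2
          + |p + q| * |a - b| * |2 * (p - q) + ε * (a - b)|) / 2 := by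
        refine (abs_add_le _ _).trans ?_
        rw [abs_div, abs_two, ← abs_mul, ← abs_mul, ← abs_pow, ← abs_mul]
        gcongr
        exact abs_add_le _ _
    _ ≤ N * t + (t * (4 * N) ^ 2 + 2 * N * t * (6 * N)) / 2 := by gcongr
    _ ≤ 15 * N ^ 2 * t := by
        have ht : 0 ≤ t := add_nonneg (abs_nonneg a) (abs_nonneg b)
        nlinarith [mul_nonneg (mul_nonneg (by linarith : (0:ℝ) ≤ N) (by linarith : 0 ≤ N - 1)) ht]

theorem IntegrableBdd.hbwDensity {f g : ℝ → ℝ} (hf : IntegrableBdd f) (hg : IntegrableBdd g)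
    (ε : ℝ) : IntegrableBdd (fun x => hbwDensity ε (f x) (g x)) :=
  (((hf.pow two_ne_zero).add (hg.pow two_ne_zero)).add
    (((hf.pow three_ne_zero).add (hg.pow three_ne_zero)).const_mul (ε / 2))).sub
    ((((hf.pow two_ne_zero).mul hg).add (hf.mul (hg.pow two_ne_zero))).const_mul (ε / 2))

theorem HBW_eq_integral {f g : ℝ → ℝ} (hf : IntegrableBdd f) (hg : IntegrableBdd g) (ε : ℝ) :
    HBW ε f g = ∫ x, hbwDensity ε (f x) (g x) := by
  have h2 := ((hf.pow two_ne_zero).add (hg.pow two_ne_zero)).integrable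
  have h3 := ((hf.pow three_ne_zero).add (hg.pow three_ne_zero)).integrable
  have h21 := (((hf.pow two_ne_zero).mul hg).add (hf.mul (hg.pow two_ne_zero))).integrable
  unfold HBW hbwDensity
  rw [integral_sub (by fun_prop) (by fun_prop), integral_add h2 (by fun_prop), integral_const_mul,
    integral_const_mul]

noncomputable def birkhoffCorr (r s : ℝ → ℝ) (x : ℝ) : ℝ :=
  deriv r x * pinv s x / 4 + r x * s x / 4 + s x ^ 2 / 8

theorem TB1_eq (ε : ℝ) (r s : ℝ → ℝ) : TB1 ε r s = fun x => r x + ε * birkhoffCorr r s x := by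
  funext x; simp only [TB1, birkhoffCorr]; ring

theorem TB2_eq (ε : ℝ) (r s : ℝ → ℝ) : TB2 ε r s = fun x => s x + ε * birkhoffCorr s r x := by
  funext x; simp only [TB2, birkhoffCorr]; ring

section BirkhoffCorr

variable {r s : ℝ → ℝ}

theorem integrableBdd_birkhoffCorr (hr : MemW 2 r) (hs : MemW 2 s) :
    IntegrableBdd (birkhoffCorr r s) :=
  (((hr.integrableBdd_deriv.mul_memLp_top hs.memLp_top_pinv).div_const 4).add
    ((hr.integrableBdd.mul hs.integrableBdd).div_const 4)).add
    ((hs.integrableBdd.pow two_ne_zero).div_const 8)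

theorem abs_birkhoffCorr_le (hs : MemW 2 s) (x : ℝ) :
    |birkhoffCorr r s x| ≤ ((WNorm 2 r).toReal + (WNorm 2 s).toReal)
      * (|r x| + |deriv r x| + (|s x| + |deriv s x|)) / 4 := by
  have hsW := hs.abs_le_WNorm x
  have hPW := hs.abs_pinv_le_WNorm x
  have hrW : 0 ≤ (WNorm 2 r).toReal := ENNReal.toReal_nonneg
  calc |birkhoffCorr r s x|
      ≤ |deriv r x| * |pinv s x| / 4 + |r x| * |s x| / 4 + |s x| * |s x| / 8 := by
        refine (abs_add_le _ _).trans (add_le_add ((abs_add_le _ _).trans_eq ?_) (le_of_eq ?_))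
        · simp only [abs_div, abs_mul]; norm_num
        · simp only [abs_div, sq]; norm_num
    _ ≤ |deriv r x| * ((WNorm 2 s).toReal / 2) / 4 + |r x| * (WNorm 2 s).toReal / 4
          + |s x| * (WNorm 2 s).toReal / 8 := by gcongr
    _ ≤ _ := by
        have hsW0 : 0 ≤ (WNorm 2 s).toReal := ENNReal.toReal_nonneg
        nlinarith [mul_nonneg hrW (abs_nonneg (r x)), mul_nonneg hrW (abs_nonneg (deriv r x)),
          mul_nonneg hrW (abs_nonneg (s x)), mul_nonneg hrW (abs_nonneg (deriv s x)),
          mul_nonneg hsW0 (abs_nonneg (deriv r x)), mul_nonneg hsW0 (abs_nonneg (s x)),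
          mul_nonneg hsW0 (abs_nonneg (deriv s x))]

theorem abs_birkhoffCorr_le_sq (hr : MemW 2 r) (hs : MemW 2 s) (x : ℝ) :
    |birkhoffCorr r s x| ≤ ((WNorm 2 r).toReal + (WNorm 2 s).toReal) ^ 2 / 2 := by
  have hm : 0 ≤ (WNorm 2 r).toReal + (WNorm 2 s).toReal :=
    add_nonneg ENNReal.toReal_nonneg ENNReal.toReal_nonneg
  calc |birkhoffCorr r s x| ≤ _ := abs_birkhoffCorr_le hs x
    _ ≤ ((WNorm 2 r).toReal + (WNorm 2 s).toReal)
          * (2 * ((WNorm 2 r).toReal + (WNorm 2 s).toReal)) / 4 := by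
        gcongr
        linarith [hr.abs_le_WNorm x, hr.abs_deriv_le_WNorm x, hs.abs_le_WNorm x,
          hs.abs_deriv_le_WNorm x]
    _ = _ := by ring

theorem integral_abs_birkhoffCorr_add_le (hr : MemW 2 r) (hs : MemW 2 s) :
    ∫ x, (|birkhoffCorr r s x| + |birkhoffCorr s r x|)
      ≤ ((WNorm 2 r).toReal + (WNorm 2 s).toReal) ^ 2 / 2 := by
  set m := (WNorm 2 r).toReal + (WNorm 2 s).toReal
  have hm : 0 ≤ m := add_nonneg ENNReal.toReal_nonneg ENNReal.toReal_nonneg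
  have hwr : Integrable fun x => |r x| + |deriv r x| :=
    hr.integrable.abs.add hr.integrable_deriv.abs
  have hws : Integrable fun x => |s x| + |deriv s x| :=
    hs.integrable.abs.add hs.integrable_deriv.abs
  have hw : ∫ x, ((|r x| + |deriv r x|) + (|s x| + |deriv s x|)) ≤ m := by
    rw [integral_add hwr hws]
    linarith [hr.integral_abs_add_abs_deriv_le, hs.integral_abs_add_abs_deriv_le]
  calc ∫ x, (|birkhoffCorr r s x| + |birkhoffCorr s r x|)
      ≤ ∫ x, m / 2 * ((|r x| + |deriv r x|) + (|s x| + |deriv s x|)) := by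
        refine integral_mono ((integrableBdd_birkhoffCorr hr hs).integrable.abs.add
          (integrableBdd_birkhoffCorr hs hr).integrable.abs) ((hwr.add hws).const_mul _)
          fun x => ?_
        linarith [abs_birkhoffCorr_le (r := r) hs x, abs_birkhoffCorr_le (r := s) hr x]
    _ = m / 2 * ∫ x, ((|r x| + |deriv r x|) + (|s x| + |deriv s x|)) := integral_const_mul _ _
    _ ≤ m ^ 2 / 2 := by nlinarith

theorem integral_birkhoff_first_order_eq_zero (hr : MemW 2 r) (hs : MemW 2 s) :
    ∫ x, (2 * r x * birkhoffCorr r s x - r x * s x * (r x + s x) / 4) = 0 := by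
  have hderiv : ∀ x, HasDerivAt (fun x => r x ^ 2 * pinv s x / 4)
      (2 * r x * birkhoffCorr r s x - r x * s x * (r x + s x) / 4) x := fun x => by
    refine ((((hr.differentiable x).hasDerivAt.pow 2).mul
      (hasDerivAt_pinv hs.differentiable.continuous hs.integrable x)).div_const 4).congr_deriv ?_
    simp only [birkhoffCorr, Pi.pow_apply]
    ring
  refine integral_eq_zero_of_hasDerivAt_of_integrable hderiv ?_ ?_
  · exact (((hr.integrableBdd.const_mul 2).mul (integrableBdd_birkhoffCorr hr hs)).sub
      (((hr.integrableBdd.mul hs.integrableBdd).mul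
        (hr.integrableBdd.add hs.integrableBdd)).div_const 4)).integrable
  · exact (((hr.integrableBdd.pow two_ne_zero).mul_memLp_top hs.memLp_top_pinv).div_const
      4).integrable

end BirkhoffCorr

section Remainder

variable {r s : ℝ → ℝ}

theorem HBW_TB_sub_eq_integral (hr : MemW 2 r) (hs : MemW 2 s) (ε : ℝ) :
    HBW ε (TB1 ε r s) (TB2 ε r s) - (∫ x, ((r x) ^ 2 + (s x) ^ 2))
        - ε * ((1 / 2) * ∫ x, ((r x) ^ 3 + (s x) ^ 3))
      = ∫ x, (hbwDensity ε (r x + ε * birkhoffCorr r s x) (s x + ε * birkhoffCorr s r x)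
          - hbwDensity ε (r x) (s x)
          - 2 * ε * (r x * birkhoffCorr r s x + s x * birkhoffCorr s r x)) := by
  set A := birkhoffCorr r s
  set B := birkhoffCorr s r
  have hA : IntegrableBdd A := integrableBdd_birkhoffCorr hr hs
  have hB : IntegrableBdd B := integrableBdd_birkhoffCorr hs hr
  have hr' := hr.integrableBdd
  have hs' := hs.integrableBdd
  have hr1 := hr'.add (hA.const_mul ε)
  have hs1 := hs'.add (hB.const_mul ε)
  have iΦ := (hr1.hbwDensity hs1 ε).integrable
  have iL := ((hr'.pow two_ne_zero).add (hs'.pow two_ne_zero)).integrable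
  have iZ := ((hr'.pow three_ne_zero).add (hs'.pow three_ne_zero)).integrable
  have iGr := (((hr'.const_mul 2).mul hA).sub
    (((hr'.mul hs').mul (hr'.add hs')).div_const 4)).integrable
  have iGs := (((hs'.const_mul 2).mul hB).sub
    (((hs'.mul hr').mul (hs'.add hr')).div_const 4)).integrable
  have hpt : ∀ x, hbwDensity ε (r x + ε * A x) (s x + ε * B x) - hbwDensity ε (r x) (s x)
        - 2 * ε * (r x * A x + s x * B x)
      = hbwDensity ε (r x + ε * A x) (s x + ε * B x) - (r x ^ 2 + s x ^ 2)
        - ε / 2 * (r x ^ 3 + s x ^ 3)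
        - ε * (2 * r x * A x - r x * s x * (r x + s x) / 4)
        - ε * (2 * s x * B x - s x * r x * (s x + r x) / 4) := fun x => by
    unfold hbwDensity; ring
  rw [TB1_eq, TB2_eq, HBW_eq_integral hr1 hs1, integral_congr_ae (Eventually.of_forall hpt),
    integral_sub (by fun_prop) (by fun_prop), integral_sub (by fun_prop) (by fun_prop),
    integral_sub (by fun_prop) (by fun_prop), integral_sub iΦ iL, integral_const_mul,
    integral_const_mul, integral_const_mul, integral_birkhoff_first_order_eq_zero hr hs,
    integral_birkhoff_first_order_eq_zero hs hr]
  ring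

theorem abs_integral_remainder_le (hr : MemW 2 r) (hs : MemW 2 s) {ε : ℝ} (hε0 : 0 ≤ ε)
    (hε1 : ε ≤ 1) :
    |∫ x, (hbwDensity ε (r x + ε * birkhoffCorr r s x) (s x + ε * birkhoffCorr s r x)
          - hbwDensity ε (r x) (s x)
          - 2 * ε * (r x * birkhoffCorr r s x + s x * birkhoffCorr s r x))|
      ≤ ε ^ 2 * (15 / 2 * (1 + ((WNorm 2 r).toReal + (WNorm 2 s).toReal)) ^ 6) := by
  set A := birkhoffCorr r s
  set B := birkhoffCorr s r
  set m := (WNorm 2 r).toReal + (WNorm 2 s).toReal with hm_def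
  have hm : 0 ≤ m := add_nonneg ENNReal.toReal_nonneg ENNReal.toReal_nonneg
  -- `r`, `s`, `A` and `B` are all bounded by `N = (1 + m) ^ 2`
  have hN : 1 ≤ (1 + m) ^ 2 := one_le_pow₀ (by linarith)
  have hmN : m ≤ (1 + m) ^ 2 := by nlinarith
  have hm2N : m ^ 2 / 2 ≤ (1 + m) ^ 2 := by nlinarith
  have hpt : ∀ x, ‖hbwDensity ε (r x + ε * A x) (s x + ε * B x) - hbwDensity ε (r x) (s x)
        - 2 * ε * (r x * A x + s x * B x)‖ ≤ ε ^ 2 * (15 * ((1 + m) ^ 2) ^ 2 * (|A x| + |B x|)) :=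
    fun x => abs_hbwDensity_sub_le hε0 hε1 hN
      ((hr.abs_le_WNorm x).trans (by linarith [hs.abs_le_WNorm x, abs_nonneg (s x)]))
      ((hs.abs_le_WNorm x).trans (by linarith [hr.abs_le_WNorm x, abs_nonneg (r x)]))
      ((abs_birkhoffCorr_le_sq hr hs x).trans hm2N)
      ((abs_birkhoffCorr_le_sq hs hr x).trans (by rw [add_comm, ← hm_def]; exact hm2N))
  calc _ ≤ ∫ x, ε ^ 2 * (15 * ((1 + m) ^ 2) ^ 2 * (|A x| + |B x|)) :=
        norm_integral_le_of_norm_le (((integrableBdd_birkhoffCorr hr hs).integrable.abs.add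
          (integrableBdd_birkhoffCorr hs hr).integrable.abs).const_mul _ |>.const_mul _)
          (Eventually.of_forall hpt)
    _ = ε ^ 2 * (15 * (1 + m) ^ 4 * ∫ x, (|A x| + |B x|)) := by
        rw [integral_const_mul, integral_const_mul]; ring
    _ ≤ ε ^ 2 * (15 * (1 + m) ^ 4 * (m ^ 2 / 2)) := by
        gcongr; exact integral_abs_birkhoffCorr_add_le hr hs
    _ ≤ ε ^ 2 * (15 / 2 * (1 + m) ^ 6) := by
        refine mul_le_mul_of_nonneg_left ?_ (sq_nonneg ε)
        have hm2 : m ^ 2 ≤ (1 + m) ^ 2 := by nlinarith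
        nlinarith [mul_le_mul_of_nonneg_left hm2 (pow_nonneg (by linarith : (0:ℝ) ≤ 1 + m) 4)]

end Remainder

theorem statement14 :
    ∃ C : ℝ → ℝ → ℝ,
      (∀ a a' b b' : ℝ, a ≤ a' → b ≤ b' → C a b ≤ C a' b') ∧
      ∀ ε ∈ Set.Icc (0:ℝ) 1, ∀ r s : ℝ → ℝ, MemW 2 r → MemW 2 s →
        |HBW ε (TB1 ε r s) (TB2 ε r s)
            - (∫ x, ((r x) ^ 2 + (s x) ^ 2))
            - ε * ((1 / 2) * ∫ x, ((r x) ^ 3 + (s x) ^ 3))|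
          ≤ ε ^ 2 * C (WNorm 2 r).toReal (WNorm 2 s).toReal := by
  refine ⟨fun a b => 15 / 2 * (1 + (max a 0 + max b 0)) ^ 6, fun a a' b b' ha hb => by
    dsimp only; gcongr, ?_⟩
  rintro ε ⟨hε0, hε1⟩ r s hr hs
  beta_reduce
  rw [HBW_TB_sub_eq_integral hr hs, max_eq_left ENNReal.toReal_nonneg,
    max_eq_left ENNReal.toReal_nonneg]
  exact abs_integral_remainder_le hr hs hε0 hε1
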